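/- Let C = {c_1, ..., c_r} be a color set and f: C -> non-negative integers with sum of f(c_i) equal to n - m. An edge-colored graph G of order n has a spanning forest with exactly m components and exactly f(c_i) edges of color c_i for each i, if and only if for every subset R of C, the number of components of G - E_R(G) is at most m + sum over c in R of f(c). -/

import Mathlib

open SimpleGraph Finset

/-- Number of connected components of a graph. -/
noncomputable def omega {V : Type*} (G : SimpleGraph V) : ℕ :=
  Nat.card G.ConnectedComponent

/-- Number of edges of `G` having color `c`. -/
noncomputable def colorCount {V C : Type*} (G : SimpleGraph V)
    (color : Sym2 V → C) (c : C) : ℕ :=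
  Nat.card {e : Sym2 V // e ∈ G.edgeSet ∧ color e = c}

/-- `G` is `f`-chromatic: each color `c` appears on at most `f c` edges. -/
def IsChromatic {V C : Type*} (G : SimpleGraph V)
    (color : Sym2 V → C) (f : C → ℕ) : Prop :=
  ∀ c, colorCount G color c ≤ f c

/-- `G - E_R(G)` : delete all edges whose color lies in `R`. -/
def delR {V C : Type*} (G : SimpleGraph V) (color : Sym2 V → C)
    (R : Finset C) : SimpleGraph V :=
  G.deleteEdges {e | color e ∈ R}

/-!
Edge sets form the graphic matroid, whose rank function is `S ↦ n - ω(V, S)`. A spanning forest with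
`m` components and colour profile `f` is an independent set of size `n - m` with exactly `f c`
elements of each colour `c`, and since `G - E_R(G)` is the graph of the edges with colours in the
complement `D` of `R`, the component condition says `f(D) ≤ rank(E_D)` for every `D`: this is
Rado's condition, and the theorem is Rado's theorem for the graphic matroid.

Rado's theorem is proved by induction on `∑ f`: for a colour `c₀` with `f c₀ > 0` there is an
edge `e` of colour `c₀` whose contraction preserves Rado's condition for `f` with `f c₀`
lowered by one. Otherwise the union `D₀` of the tight colour classes avoiding `c₀` (tight by
submodularity) would span all edges of colour `c₀`, and Rado's condition would fail for
`D₀ ∪ {c₀}`.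
-/

section MatroidRank

variable {E C : Type*} [DecidableEq E]

structure IsMatroidRank (r : Finset E → ℕ) : Prop where
  empty : r ∅ = 0
  mono : Monotone r
  insert_le : ∀ S e, r (insert e S) ≤ r S + 1
  submod : ∀ S T, r (S ∪ T) + r (S ∩ T) ≤ r S + r T

theorem submod_of_diminishing_returns {r : Finset E → ℕ}
    (h : ∀ S T e, S ⊆ T → r (insert e T) + r S ≤ r (insert e S) + r T) (S T : Finset E) :
    r (S ∪ T) + r (S ∩ T) ≤ r S + r T := by
  have key : ∀ U S T : Finset E, S ⊆ T → r (T ∪ U) + r S ≤ r (S ∪ U) + r T := by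
    intro U
    induction U using Finset.induction with
    | empty => intro S T _; simp [add_comm]
    | insert e U _ ih =>
      intro S T hST
      rw [union_insert, union_insert]
      have := h _ _ e (union_subset_union_left hST (t := U))
      have := ih S T hST
      omega
  have := key T (S ∩ T) S inter_subset_left
  rwa [union_eq_right.2 inter_subset_right, add_comm (r T)] at this

namespace IsMatroidRank

variable {r : Finset E → ℕ} (hr : IsMatroidRank r)
include hr

theorem union_le_add_card (S T : Finset E) : r (S ∪ T) ≤ r S + #T := by
  induction T using Finset.induction with
  | empty => simp
  | insert e T he ih =>
    rw [union_insert, card_insert_of_notMem he]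
    have := hr.insert_le (S ∪ T) e
    omega

theorem le_card (S : Finset E) : r S ≤ #S := by
  simpa [hr.empty] using hr.union_le_add_card ∅ S

theorem insert_eq_of_subset {S T : Finset E} {e : E} (hST : S ⊆ T)
    (he : r (insert e S) = r S) : r (insert e T) = r T := by
  have hsub := hr.submod (insert e S) T
  rw [insert_union, union_eq_right.2 hST] at hsub
  have hS : r S ≤ r (insert e S ∩ T) :=
    hr.mono (subset_inter (subset_insert e S) hST)
  have hT : r T ≤ r (insert e T) := hr.mono (subset_insert e T)
  omega

theorem union_eq_of_forall_insert_eq {S T : Finset E}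
    (h : ∀ e ∈ T, r (insert e S) = r S) : r (S ∪ T) = r S := by
  induction T using Finset.induction with
  | empty => simp
  | insert e T _ ih =>
    rw [union_insert]
    exact (hr.insert_eq_of_subset subset_union_left (h e (mem_insert_self e T))).trans
      (ih fun x hx => h x (mem_insert_of_mem hx))

theorem contract {e : E} (he : r {e} = 1) : IsMatroidRank fun S => r (insert e S) - 1 := by
  have hpos : ∀ S, 1 ≤ r (insert e S) := fun S =>
    he ▸ hr.mono (singleton_subset_iff.2 (mem_insert_self e S))
  refine ⟨by simp [he], fun S T hST => ?_, fun S a => ?_, fun S T => ?_⟩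
  · exact Nat.sub_le_sub_right (hr.mono (insert_subset_insert e hST)) 1
  · have := hr.insert_le (insert e S) a
    rw [insert_comm] at this
    have := hpos S
    omega
  · have hsub := hr.submod (insert e S) (insert e T)
    rw [← insert_union_distrib, ← insert_inter_distrib] at hsub
    have := hpos (S ∩ T)
    have := hpos S
    have := hpos T
    have := hpos (S ∪ T)
    omega

end IsMatroidRank

variable [DecidableEq C]

def RadoCondition (r : Finset E → ℕ) (ground : Finset E) (color : E → C) (f : C → ℕ) : Prop :=
  ∀ D : Finset C, ∑ c ∈ D, f c ≤ r (ground.filter (color · ∈ D))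

theorem filter_color_mem_union (ground : Finset E) (color : E → C) (D D' : Finset C) :
    ground.filter (color · ∈ D ∪ D') =
      ground.filter (color · ∈ D) ∪ ground.filter (color · ∈ D') := by
  simp only [mem_union, filter_or]

theorem filter_color_mem_inter (ground : Finset E) (color : E → C) (D D' : Finset C) :
    ground.filter (color · ∈ D ∩ D') =
      ground.filter (color · ∈ D) ∩ ground.filter (color · ∈ D') := by
  simp only [mem_inter, filter_and]

namespace RadoCondition

variable {r : Finset E → ℕ} {ground : Finset E} {color : E → C} {f : C → ℕ}

theorem tight_union (hr : IsMatroidRank r) (h : RadoCondition r ground color f)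
    {D D' : Finset C} (hD : r (ground.filter (color · ∈ D)) = ∑ c ∈ D, f c)
    (hD' : r (ground.filter (color · ∈ D')) = ∑ c ∈ D', f c) :
    r (ground.filter (color · ∈ D ∪ D')) = ∑ c ∈ D ∪ D', f c := by
  have hsub := hr.submod (ground.filter (color · ∈ D)) (ground.filter (color · ∈ D'))
  rw [← filter_color_mem_union, ← filter_color_mem_inter, hD, hD'] at hsub
  have := h (D ∪ D')
  have := h (D ∩ D')
  have := sum_union_inter (s₁ := D) (s₂ := D') (f := f)
  omega

theorem exists_contractible [Fintype C] (hr : IsMatroidRank r) (h : RadoCondition r ground color f)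
    {c₀ : C} (hc₀ : 0 < f c₀) :
    ∃ e ∈ ground, color e = c₀ ∧
      ∀ D : Finset C, c₀ ∉ D → ∑ c ∈ D, f c + 1 ≤ r (insert e (ground.filter (color · ∈ D))) := by
  classical
  by_contra! hbad
  let IsTight (D : Finset C) : Prop :=
    c₀ ∉ D ∧ r (ground.filter (color · ∈ D)) = ∑ c ∈ D, f c
  set D₀ := (univ.filter IsTight).sup id
  have hD₀tight : IsTight D₀ := by
    refine sup_induction (p := IsTight) ⟨notMem_empty c₀, by simp [hr.empty]⟩
      (fun D hD D' hD' => ⟨?_, h.tight_union hr hD.2 hD'.2⟩) (fun D hD => (mem_filter.1 hD).2)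
    simpa using ⟨hD.1, hD'.1⟩
  have hspan : ∀ e ∈ ground.filter (color · ∈ ({c₀} : Finset C)),
      r (insert e (ground.filter (color · ∈ D₀))) = r (ground.filter (color · ∈ D₀)) := by
    intro e he
    obtain ⟨heg, hec⟩ := mem_filter.1 he
    obtain ⟨D, hD, hlt⟩ := hbad e heg (mem_singleton.1 hec)
    have hmono := hr.mono (subset_insert e (ground.filter (color · ∈ D)))
    have hDtight : IsTight D := ⟨hD, le_antisymm (by omega) (h D)⟩
    have hDD₀ : D ⊆ D₀ := le_sup (f := id) (mem_filter.2 ⟨mem_univ D, hDtight⟩)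
    refine hr.insert_eq_of_subset (monotone_filter_right _ fun x _ hx => hDD₀ hx) ?_
    have := h D
    omega
  have := h (D₀ ∪ {c₀})
  rw [filter_color_mem_union, hr.union_eq_of_forall_insert_eq hspan, hD₀tight.2,
    sum_union (disjoint_singleton_right.2 hD₀tight.1), sum_singleton] at this
  omega

theorem contract (h : RadoCondition r ground color f) {e : E} {c₀ : C} (he : e ∈ ground)
    (hec : color e = c₀) (hc₀ : 0 < f c₀)
    (hcontr : ∀ D : Finset C, c₀ ∉ D →
      ∑ c ∈ D, f c + 1 ≤ r (insert e (ground.filter (color · ∈ D)))) :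
    RadoCondition (fun S => r (insert e S) - 1) (ground.erase e) color
      (Function.update f c₀ (f c₀ - 1)) := by
  intro D
  dsimp only
  rw [filter_erase]
  by_cases hD : c₀ ∈ D
  · have heD : e ∈ ground.filter (color · ∈ D) := mem_filter.2 ⟨he, hec ▸ hD⟩
    rw [insert_erase heD, sum_update_of_mem hD]
    have := h D
    rw [sum_eq_add_sum_sdiff_singleton_of_mem hD] at this
    omega
  · have heD : e ∉ ground.filter (color · ∈ D) := fun h' => hD (hec ▸ (mem_filter.1 h').2)
    rw [erase_eq_of_notMem heD, sum_update_of_notMem hD]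
    have := hcontr D hD
    omega

end RadoCondition

theorem IsMatroidRank.exists_indep_of_radoCondition [Fintype C] {r : Finset E → ℕ}
    (hr : IsMatroidRank r) {ground : Finset E} {color : E → C} {f : C → ℕ}
    (h : RadoCondition r ground color f) :
    ∃ S ⊆ ground, r S = #S ∧ ∀ c, #(S.filter (color · = c)) = f c := by
  induction hN : ∑ c, f c generalizing r ground f with
  | zero =>
    refine ⟨∅, empty_subset _, hr.empty, fun c => ?_⟩
    simpa using (sum_eq_zero_iff.1 hN c (mem_univ c)).symm
  | succ N ih =>
    obtain ⟨c₀, hc₀⟩ : ∃ c, 0 < f c := by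
      by_contra! hf
      simp [fun c => Nat.le_zero.1 (hf c)] at hN
    obtain ⟨e, he, rfl, hcontr⟩ := h.exists_contractible hr hc₀
    have hre : r {e} = 1 :=
      le_antisymm (by simpa [hr.empty] using hr.insert_le ∅ e)
        (by simpa using hcontr ∅ (notMem_empty _))
    have hN' : ∑ c, Function.update f (color e) (f (color e) - 1) c = N := by
      rw [sum_update_of_mem (mem_univ _)]
      rw [sum_eq_add_sum_sdiff_singleton_of_mem (mem_univ (color e))] at hN
      omega
    obtain ⟨S, hS, hSr, hSc⟩ := ih (hr.contract hre) (h.contract he rfl hc₀ hcontr) hN'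
    have heS : e ∉ S := fun h' => (mem_erase.1 (hS h')).1 rfl
    refine ⟨insert e S, insert_subset he (hS.trans (erase_subset e ground)), ?_, fun c => ?_⟩
    · have := hr.mono (singleton_subset_iff.2 (mem_insert_self e S))
      rw [card_insert_of_notMem heS]
      omega
    · have := hSc c
      rw [filter_insert]
      split_ifs with hc
      · subst hc
        rw [card_insert_of_notMem fun h' => heS (mem_filter.1 h').1]
        rw [Function.update_self] at this
        omega
      · rwa [Function.update_of_ne (Ne.symm hc)] at this

end MatroidRank

section Components

variable {V β : Type*}

theorem SimpleGraph.Reachable.apply_eq_of_forall_adj {H : SimpleGraph V} {g : V → β}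
    (hg : ∀ ⦃u v⦄, H.Adj u v → g u = g v) {u v : V} (h : H.Reachable u v) : g u = g v := by
  obtain ⟨p⟩ := h
  induction p with
  | nil => rfl
  | cons hadj _ ih => exact (hg hadj).trans ih

theorem exists_retraction_map_sup_edge (H : SimpleGraph V) (a b : V) :
    ∃ ψ : (H ⊔ edge a b).ConnectedComponent → H.ConnectedComponent,
      (∀ x ≠ H.connectedComponentMk b, ψ (x.map (Hom.ofLE le_sup_left)) = x) ∧
        ψ ((H.connectedComponentMk b).map (Hom.ofLE le_sup_left)) = H.connectedComponentMk a := by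
  classical
  let g (v : V) : H.ConnectedComponent :=
    if H.connectedComponentMk v = H.connectedComponentMk b then H.connectedComponentMk a
    else H.connectedComponentMk v
  refine ⟨ConnectedComponent.lift g fun v w p _ => p.reachable.apply_eq_of_forall_adj ?_,
    ConnectedComponent.ind fun v hv => if_neg hv, if_pos rfl⟩
  intro u v huv
  rcases huv with huv | huv
  · simp only [g, ConnectedComponent.sound huv.reachable]
  · obtain ⟨⟨rfl, rfl⟩ | ⟨rfl, rfl⟩, -⟩ := (edge_adj ..).1 huv <;> simp [g]

theorem omega_sup_edge_of_reachable {H : SimpleGraph V} {a b : V} (h : H.Reachable a b) :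
    omega (H ⊔ edge a b) = omega H := by
  obtain ⟨ψ, hψ, hψb⟩ := exists_retraction_map_sup_edge H a b
  have hleft : Function.LeftInverse ψ (ConnectedComponent.map (Hom.ofLE le_sup_left)) := by
    intro x
    by_cases hx : x = H.connectedComponentMk b
    · rw [hx, hψb, ConnectedComponent.sound h]
    · exact hψ x hx
  exact (Nat.card_eq_of_bijective _
    ⟨hleft.injective, ConnectedComponent.surjective_map_ofLE _⟩).symm

theorem omega_sup_edge_of_not_reachable [Finite V] {H : SimpleGraph V} {a b : V}
    (h : ¬H.Reachable a b) : omega H = omega (H ⊔ edge a b) + 1 := by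
  classical
  obtain ⟨ψ, hψ, -⟩ := exists_retraction_map_sup_edge H a b
  set cb := H.connectedComponentMk b
  have hacb : H.connectedComponentMk a ≠ cb := fun h' => h (ConnectedComponent.exact h')
  have hab : (H ⊔ edge a b).Reachable a b := by
    refine Adj.reachable (Or.inr ((edge_adj ..).2 ⟨Or.inl ⟨rfl, rfl⟩, ?_⟩))
    rintro rfl
    exact h .rfl
  have hbij : Function.Bijective fun x : {x // x ≠ cb} =>
      (x : H.ConnectedComponent).map (Hom.ofLE (le_sup_left : H ≤ H ⊔ edge a b)) := by
    refine ⟨fun x y hxy => Subtype.ext ?_, fun y => ?_⟩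
    · simpa [hψ x x.2, hψ y y.2] using congrArg ψ hxy
    · obtain ⟨x, rfl⟩ := ConnectedComponent.surjective_map_ofLE le_sup_left y
      by_cases hx : x = cb
      · exact ⟨⟨_, hacb⟩, hx.symm ▸ ConnectedComponent.sound hab⟩
      · exact ⟨⟨x, hx⟩, rfl⟩
  rw [omega, omega, ← Nat.card_eq_of_bijective _ hbij, ← Finite.card_option,
    Nat.card_congr (Equiv.optionSubtypeNe cb)]

variable [Fintype V]

theorem omega_le_card (H : SimpleGraph V) : omega H ≤ Fintype.card V :=
  Nat.card_eq_fintype_card (α := V) ▸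
    Nat.card_le_card_of_surjective _ (ConnectedComponent.ind fun v => ⟨v, rfl⟩)

theorem omega_bot : omega (⊥ : SimpleGraph V) = Fintype.card V :=
  Nat.card_eq_fintype_card (α := V) ▸ (Nat.card_eq_of_bijective _
    ⟨fun _ _ h => reachable_bot.1 (ConnectedComponent.exact h),
      ConnectedComponent.ind fun v => ⟨v, rfl⟩⟩).symm

end Components

section GraphicRank

variable {V : Type*} [DecidableEq V]

theorem fromEdgeSet_insert (a b : V) (S : Finset (Sym2 V)) :
    fromEdgeSet ((insert s(a, b) S : Finset (Sym2 V)) : Set (Sym2 V)) =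
      fromEdgeSet (S : Set (Sym2 V)) ⊔ edge a b := by
  rw [coe_insert, Set.insert_eq, fromEdgeSet_union, sup_comm, edge]

variable [Fintype V]

noncomputable def graphicRank (S : Finset (Sym2 V)) : ℕ :=
  Fintype.card V - omega (fromEdgeSet (S : Set (Sym2 V)))

theorem graphicRank_insert_of_reachable {S : Finset (Sym2 V)} {a b : V}
    (h : (fromEdgeSet (S : Set (Sym2 V))).Reachable a b) :
    graphicRank (insert s(a, b) S) = graphicRank S := by
  rw [graphicRank, graphicRank, fromEdgeSet_insert, omega_sup_edge_of_reachable h]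

theorem graphicRank_insert_of_not_reachable {S : Finset (Sym2 V)} {a b : V}
    (h : ¬(fromEdgeSet (S : Set (Sym2 V))).Reachable a b) :
    graphicRank (insert s(a, b) S) = graphicRank S + 1 := by
  have hω := omega_sup_edge_of_not_reachable h
  have := omega_le_card (fromEdgeSet (S : Set (Sym2 V)))
  rw [graphicRank, graphicRank, fromEdgeSet_insert]
  omega

theorem graphicRank_insert_le (S : Finset (Sym2 V)) (e : Sym2 V) :
    graphicRank (insert e S) ≤ graphicRank S + 1 := by
  induction e using Sym2.ind with
  | _ a b =>
    by_cases h : (fromEdgeSet (S : Set (Sym2 V))).Reachable a b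
    · rw [graphicRank_insert_of_reachable h]
      omega
    · rw [graphicRank_insert_of_not_reachable h]

theorem isMatroidRank_graphicRank : IsMatroidRank (graphicRank (V := V)) where
  empty := by simp [graphicRank, omega_bot]
  mono _ _ h := Nat.sub_le_sub_left
    (ConnectedComponent.card_le_card_of_le (fromEdgeSet_mono (coe_subset.2 h))) _
  insert_le := graphicRank_insert_le
  submod := submod_of_diminishing_returns fun S T e hST => by
    induction e using Sym2.ind with
    | _ a b =>
      by_cases h : (fromEdgeSet (S : Set (Sym2 V))).Reachable a b
      · have hT := h.mono (fromEdgeSet_mono (coe_subset.2 hST))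
        rw [graphicRank_insert_of_reachable h, graphicRank_insert_of_reachable hT, add_comm]
      · rw [graphicRank_insert_of_not_reachable h]
        have := graphicRank_insert_le T s(a, b)
        omega

theorem isAcyclic_fromEdgeSet_of_graphicRank_eq_card {S : Finset (Sym2 V)}
    (h : graphicRank S = #S) : (fromEdgeSet (S : Set (Sym2 V))).IsAcyclic := by
  rw [isAcyclic_iff_forall_isBridge]
  intro e he
  induction e using Sym2.ind with
  | _ a b =>
    have hmem : s(a, b) ∈ S := by simpa using (edgeSet_fromEdgeSet _ ▸ he).1
    rw [← insert_erase hmem, fromEdgeSet_insert, isBridge_sup_edge]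
    refine IsBridge.of_not_reachable fun hr => ?_
    have hrk := graphicRank_insert_of_reachable hr
    rw [insert_erase hmem] at hrk
    have := isMatroidRank_graphicRank.le_card (S.erase s(a, b))
    rw [card_erase_of_mem hmem] at this
    have := card_pos.2 ⟨_, hmem⟩
    omega

end GraphicRank

section ColoredForests

variable {V C : Type*}

theorem colorCount_eq_card_filter (H : SimpleGraph V) [Fintype H.edgeSet] [DecidableEq C]
    (color : Sym2 V → C) (c : C) :
    colorCount H color c = #(H.edgeFinset.filter (color · = c)) := by
  rw [colorCount, ← Nat.card_eq_finsetCard]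
  exact Nat.card_congr (Equiv.subtypeEquivRight fun e => by simp)

theorem card_filter_color_mem_eq_sum {E : Type*} [DecidableEq C] (S : Finset E)
    (color : E → C) (R : Finset C) :
    #(S.filter (color · ∈ R)) = ∑ c ∈ R, #(S.filter (color · = c)) := by
  rw [card_eq_sum_card_fiberwise fun e (he : e ∈ S.filter (color · ∈ R)) => (mem_filter.1 he).2]
  refine sum_congr rfl fun c hc => congrArg card ?_
  rw [filter_filter]
  exact filter_congr fun e _ => ⟨And.right, fun h => ⟨h ▸ hc, h⟩⟩

variable [Fintype V]

theorem omega_delR_le_of_colorCount_eq [DecidableEq C] {G F : SimpleGraph V} (hFG : F ≤ G)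
    {color : Sym2 V → C} {f : C → ℕ} (hcount : ∀ c, colorCount F color c = f c)
    (R : Finset C) : omega (delR G color R) ≤ omega F + ∑ c ∈ R, f c := by
  classical
  set T := F.edgeFinset.filter (color · ∉ R)
  have hT : fromEdgeSet (T : Set (Sym2 V)) = delR F color R := by
    rw [← fromEdgeSet_edgeSet (delR F color R)]
    congr 1
    ext e
    simp [T, delR, and_comm]
  have hsplit : T ∪ F.edgeFinset.filter (color · ∈ R) = F.edgeFinset := by
    rw [union_comm, filter_union_filter_not_eq]
  have hle := isMatroidRank_graphicRank.union_le_add_card T (F.edgeFinset.filter (color · ∈ R))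
  have hR : ∑ c ∈ R, #(F.edgeFinset.filter (color · = c)) = ∑ c ∈ R, f c :=
    sum_congr rfl fun c _ => by rw [← colorCount_eq_card_filter, hcount]
  rw [hsplit, card_filter_color_mem_eq_sum, hR] at hle
  simp only [graphicRank, coe_edgeFinset, fromEdgeSet_edgeSet, hT] at hle
  have hGF : omega (delR G color R) ≤ omega (delR F color R) :=
    ConnectedComponent.card_le_card_of_le (deleteEdges_mono hFG)
  have := omega_le_card F
  have := omega_le_card (delR F color R)
  omega

theorem exists_isAcyclic_colorCount_eq_of_omega_delR_le [Fintype C] [DecidableEq C]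
    (G : SimpleGraph V) (color : Sym2 V → C) (f : C → ℕ) {m : ℕ} (hm : m ≤ Fintype.card V)
    (hsum : ∑ c, f c = Fintype.card V - m)
    (hcond : ∀ R : Finset C, omega (delR G color R) ≤ m + ∑ c ∈ R, f c) :
    ∃ F : SimpleGraph V, F ≤ G ∧ F.IsAcyclic ∧ omega F = m ∧
      ∀ c, colorCount F color c = f c := by
  classical
  have hrado : RadoCondition graphicRank G.edgeFinset color f := by
    intro D
    have hD : fromEdgeSet ((G.edgeFinset.filter (color · ∈ D) : Finset (Sym2 V)) : Set (Sym2 V)) =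
        delR G color Dᶜ := by
      rw [← fromEdgeSet_edgeSet (delR G color Dᶜ)]
      congr 1
      ext e
      simp [delR]
    have := hcond Dᶜ
    have := sum_add_sum_compl D f
    rw [graphicRank, hD]
    omega
  obtain ⟨S, hSG, hSr, hScount⟩ := isMatroidRank_graphicRank.exists_indep_of_radoCondition hrado
  have hSF : (fromEdgeSet (S : Set (Sym2 V))).edgeFinset = S := by
    ext e
    simp only [mem_edgeFinset, edgeSet_fromEdgeSet, Set.mem_sdiff, mem_coe, and_iff_left_iff_imp]
    exact fun he => G.not_isDiag_of_mem_edgeSet (mem_edgeFinset.1 (hSG he))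
  have hcard : #S = Fintype.card V - m := by
    rw [card_eq_sum_card_fiberwise fun e _ => mem_univ (color e), ← hsum]
    exact sum_congr rfl fun c _ => hScount c
  refine ⟨fromEdgeSet S, ?_, isAcyclic_fromEdgeSet_of_graphicRank_eq_card hSr, ?_, fun c => ?_⟩
  · simpa using fromEdgeSet_mono (coe_subset.2 hSG)
  · have := omega_le_card (fromEdgeSet (S : Set (Sym2 V)))
    rw [graphicRank] at hSr
    omega
  · rw [colorCount_eq_card_filter, hSF, hScount]

end ColoredForests

theorem stmt5 {V C : Type*} [Fintype V] [Fintype C] (G : SimpleGraph V)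
    (color : Sym2 V → C) (f : C → ℕ) (n m : ℕ) (hn : Fintype.card V = n)
    (hm : m ≤ n) (hsum : ∑ c, f c = n - m) :
    (∃ F : SimpleGraph V, F ≤ G ∧ F.IsAcyclic ∧ omega F = m ∧
        ∀ c, colorCount F color c = f c) ↔
      ∀ R : Finset C, omega (delR G color R) ≤ m + ∑ c ∈ R, f c := by
  classical
  subst hn
  refine ⟨fun ⟨F, hFG, _, hFm, hcount⟩ R => ?_,
    exists_isAcyclic_colorCount_eq_of_omega_delR_le G color f hm hsum⟩
  exact hFm ▸ omega_delR_le_of_colorCount_eq hFG hcount R
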